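/- For all t > 0 one has (m/2)·W(t)/t ≤ F(t)^{-1/2} ≤ (M/2)·W(t)/t; equivalently, since W'(t) = −F(t)^{-1/2}, the inequality (m/2)·W(t)/t ≤ −W'(t) ≤ (M/2)·W(t)/t holds for all t > 0. -/

import Mathlib

open MeasureTheory Set Filter Topology

noncomputable section

/-- `F(t) = ∫₀ᵗ f(s) ds`. -/
noncomputable def Fint (f : ℝ → ℝ) (t : ℝ) : ℝ := ∫ s in (0:ℝ)..t, f s

/-- `W(t) = ∫ₜ^∞ F(s)^{-1/2} ds`. -/
noncomputable def Wfun (f : ℝ → ℝ) (t : ℝ) : ℝ := ∫ s in Set.Ioi t, (Fint f s) ^ (-(1:ℝ)/2)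

/-- `Φ(t) = φ(t^{-2})^{-1/2}`. -/
noncomputable def PhiFun (φ : ℝ → ℝ) (t : ℝ) : ℝ := (φ (t ^ (-(2:ℝ)))) ^ (-(1:ℝ)/2)

/-- The Keller–Osserman kernel `t ↦ (φ^{-1}(W(t)^{-2}))^{-1/2}`. -/
noncomputable def KOker (φinv f : ℝ → ℝ) (t : ℝ) : ℝ :=
  (φinv ((Wfun f t) ^ (-(2:ℝ)))) ^ (-(1:ℝ)/2)


lemma Fint_hasDerivAt {f : ℝ → ℝ} (hf : Continuous f) (x : ℝ) :
    HasDerivAt (Fint f) (f x) x :=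
  intervalIntegral.integral_hasDerivAt_right (hf.intervalIntegrable _ _)
    (hf.stronglyMeasurableAtFilter _ _) hf.continuousAt

lemma Fint_pos {f : ℝ → ℝ} (hf : Continuous f) (hfpos : ∀ t > 0, 0 < f t)
    {t : ℝ} (ht : 0 < t) : 0 < Fint f t :=
  intervalIntegral.intervalIntegral_pos_of_pos_on (hf.intervalIntegrable _ _)
    (fun x hx => hfpos x hx.1) ht

lemma tf_lower {m : ℝ} {f : ℝ → ℝ} (hf0 : f 0 = 0)
    (hfC1 : ContDiff ℝ 1 f)
    (hlow : ∀ t > 0, (1 + m) * f t ≤ t * deriv f t)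
    {t : ℝ} (ht : 0 < t) : (2 + m) * Fint f t ≤ t * f t := by
  set G : ℝ → ℝ := fun x => x * f x - (2 + m) * Fint f x with hG
  have hd : ∀ x, HasDerivAt G (f x + x * deriv f x - (2 + m) * f x) x := by
    intro x
    have h1 : HasDerivAt (fun x : ℝ => x * f x) (1 * f x + x * deriv f x) x :=
      (hasDerivAt_id x).mul (hfC1.differentiable one_ne_zero x).hasDerivAt
    have h2 := (Fint_hasDerivAt hfC1.continuous x).const_mul (2 + m)
    have h3 := h1.sub h2
    simp only [one_mul] at h3
    exact h3
  have hmono : MonotoneOn G (Set.Ici 0) := by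
    apply monotoneOn_of_deriv_nonneg (convex_Ici 0)
      (fun x _ => (hd x).continuousAt.continuousWithinAt)
      (fun x _ => ((hd x).differentiableAt).differentiableWithinAt)
    intro x hx
    rw [interior_Ici] at hx
    rw [(hd x).deriv]
    have := hlow x hx
    nlinarith
  have h0 : G 0 = 0 := by simp [hG, hf0, Fint]
  have := hmono (Set.self_mem_Ici) (le_of_lt ht : (0:ℝ) ≤ t) ht.le
  rw [h0] at this
  simp only [hG] at this
  linarith

lemma tf_upper {M : ℝ} {f : ℝ → ℝ} (hf0 : f 0 = 0)
    (hfC1 : ContDiff ℝ 1 f)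
    (hup : ∀ t > 0, t * deriv f t ≤ (1 + M) * f t)
    {t : ℝ} (ht : 0 < t) : t * f t ≤ (2 + M) * Fint f t := by
  set G : ℝ → ℝ := fun x => (2 + M) * Fint f x - x * f x with hG
  have hd : ∀ x, HasDerivAt G ((2 + M) * f x - (f x + x * deriv f x)) x := by
    intro x
    have h1 : HasDerivAt (fun x : ℝ => x * f x) (1 * f x + x * deriv f x) x :=
      (hasDerivAt_id x).mul (hfC1.differentiable one_ne_zero x).hasDerivAt
    have h2 := (Fint_hasDerivAt hfC1.continuous x).const_mul (2 + M)
    have h3 := h2.sub h1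
    simp only [one_mul] at h3
    exact h3
  have hmono : MonotoneOn G (Set.Ici 0) := by
    apply monotoneOn_of_deriv_nonneg (convex_Ici 0)
      (fun x _ => (hd x).continuousAt.continuousWithinAt)
      (fun x _ => ((hd x).differentiableAt).differentiableWithinAt)
    intro x hx
    rw [interior_Ici] at hx
    rw [(hd x).deriv]
    have := hup x hx
    nlinarith
  have h0 : G 0 = 0 := by simp [hG, hf0, Fint]
  have := hmono (Set.self_mem_Ici) (le_of_lt ht : (0:ℝ) ≤ t) ht.le
  rw [h0] at this
  simp only [hG] at this
  linarith

lemma phi_hasDerivAt {f : ℝ → ℝ} (hf : Continuous f) (p : ℝ) {s : ℝ} (hs : 0 < s) :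
    HasDerivAt (fun s => Fint f s * s ^ (-p)) (f s * s ^ (-p) + Fint f s * (-p * s ^ (-p - 1))) s :=
  (Fint_hasDerivAt hf s).mul (Real.hasDerivAt_rpow_const (Or.inl hs.ne'))

lemma rpow_split {s : ℝ} (hs : 0 < s) (p : ℝ) : s ^ (-p) = s * s ^ (-p - 1) := by
  rw [show (-p : ℝ) = 1 + (-p - 1) by ring, Real.rpow_add hs, Real.rpow_one]
  ring_nf

lemma phi_mono {f : ℝ → ℝ} (hf : Continuous f) {p : ℝ}
    (h : ∀ s > 0, p * Fint f s ≤ s * f s) :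
    MonotoneOn (fun s => Fint f s * s ^ (-p)) (Set.Ioi 0) := by
  apply monotoneOn_of_deriv_nonneg (convex_Ioi 0)
    (fun x hx => (phi_hasDerivAt hf p hx).continuousAt.continuousWithinAt)
    (fun x hx => by
      rw [interior_Ioi] at hx
      exact (phi_hasDerivAt hf p hx).differentiableAt.differentiableWithinAt)
  intro x hx
  rw [interior_Ioi] at hx
  rw [(phi_hasDerivAt hf p hx).deriv]
  have hsp : (0:ℝ) < x ^ (-p - 1) := Real.rpow_pos_of_pos hx _
  have hb := h x hx
  calc (0:ℝ) ≤ x ^ (-p - 1) * (x * f x - p * Fint f x) := by nlinarith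
    _ = f x * x ^ (-p) + Fint f x * (-p * x ^ (-p - 1)) := by
        rw [rpow_split hx p]; ring

lemma phi_anti {f : ℝ → ℝ} (hf : Continuous f) {p : ℝ}
    (h : ∀ s > 0, s * f s ≤ p * Fint f s) :
    AntitoneOn (fun s => Fint f s * s ^ (-p)) (Set.Ioi 0) := by
  apply antitoneOn_of_deriv_nonpos (convex_Ioi 0)
    (fun x hx => (phi_hasDerivAt hf p hx).continuousAt.continuousWithinAt)
    (fun x hx => by
      rw [interior_Ioi] at hx
      exact (phi_hasDerivAt hf p hx).differentiableAt.differentiableWithinAt)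
  intro x hx
  rw [interior_Ioi] at hx
  rw [(phi_hasDerivAt hf p hx).deriv]
  have hsp : (0:ℝ) < x ^ (-p - 1) := Real.rpow_pos_of_pos hx _
  have hb := h x hx
  calc f x * x ^ (-p) + Fint f x * (-p * x ^ (-p - 1))
      = x ^ (-p - 1) * (x * f x - p * Fint f x) := by rw [rpow_split hx p]; ring
    _ ≤ 0 := by nlinarith

lemma pow_bound_of_le {Ft Fs t s p : ℝ} (ht : 0 < t) (hs : 0 < s)
    (hFt : 0 < Ft) (hFs : 0 < Fs)
    (h : Ft * t ^ (-p) ≤ Fs * s ^ (-p)) :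
    Fs ^ (-(1:ℝ)/2) ≤ (Ft * t ^ (-p)) ^ (-(1:ℝ)/2) * s ^ (-p/2) := by
  have hA : (0:ℝ) < Ft * t ^ (-p) := mul_pos hFt (Real.rpow_pos_of_pos ht _)
  have h1 : (Fs * s ^ (-p)) ^ (-(1:ℝ)/2) ≤ (Ft * t ^ (-p)) ^ (-(1:ℝ)/2) :=
    Real.rpow_le_rpow_of_nonpos hA h (by norm_num)
  have h2 : (Fs * s ^ (-p)) ^ (-(1:ℝ)/2) = Fs ^ (-(1:ℝ)/2) * s ^ (p/2) := by
    rw [Real.mul_rpow hFs.le (Real.rpow_pos_of_pos hs _).le, ← Real.rpow_mul hs.le]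
    norm_num
    left; ring_nf
  rw [h2] at h1
  have h3 : (0:ℝ) < s ^ (-p/2) := Real.rpow_pos_of_pos hs _
  have h4 : s ^ (p/2) * s ^ (-p/2) = 1 := by
    rw [← Real.rpow_add hs, show p / 2 + -p / 2 = (0:ℝ) by ring, Real.rpow_zero]
  calc Fs ^ (-(1:ℝ)/2) = Fs ^ (-(1:ℝ)/2) * s ^ (p/2) * s ^ (-p/2) := by
        rw [mul_assoc, h4, mul_one]
    _ ≤ (Ft * t ^ (-p)) ^ (-(1:ℝ)/2) * s ^ (-p/2) :=
        mul_le_mul_of_nonneg_right h1 h3.le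

lemma pow_bound_of_ge {Ft Fs t s p : ℝ} (ht : 0 < t) (hs : 0 < s)
    (hFt : 0 < Ft) (hFs : 0 < Fs)
    (h : Fs * s ^ (-p) ≤ Ft * t ^ (-p)) :
    (Ft * t ^ (-p)) ^ (-(1:ℝ)/2) * s ^ (-p/2) ≤ Fs ^ (-(1:ℝ)/2) := by
  have hB : (0:ℝ) < Fs * s ^ (-p) := mul_pos hFs (Real.rpow_pos_of_pos hs _)
  have h1 : (Ft * t ^ (-p)) ^ (-(1:ℝ)/2) ≤ (Fs * s ^ (-p)) ^ (-(1:ℝ)/2) :=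
    Real.rpow_le_rpow_of_nonpos hB h (by norm_num)
  have h2 : (Fs * s ^ (-p)) ^ (-(1:ℝ)/2) = Fs ^ (-(1:ℝ)/2) * s ^ (p/2) := by
    rw [Real.mul_rpow hFs.le (Real.rpow_pos_of_pos hs _).le, ← Real.rpow_mul hs.le]
    norm_num
    left; ring_nf
  rw [h2] at h1
  have h3 : (0:ℝ) < s ^ (-p/2) := Real.rpow_pos_of_pos hs _
  have h4 : s ^ (p/2) * s ^ (-p/2) = 1 := by
    rw [← Real.rpow_add hs, show p / 2 + -p / 2 = (0:ℝ) by ring, Real.rpow_zero]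
  calc (Ft * t ^ (-p)) ^ (-(1:ℝ)/2) * s ^ (-p/2)
      ≤ Fs ^ (-(1:ℝ)/2) * s ^ (p/2) * s ^ (-p/2) := mul_le_mul_of_nonneg_right h1 h3.le
    _ = Fs ^ (-(1:ℝ)/2) := by rw [mul_assoc, h4, mul_one]

lemma C_simp {Ft t : ℝ} (hFt : 0 < Ft) (ht : 0 < t) (p : ℝ) :
    (Ft * t ^ (-p)) ^ (-(1:ℝ)/2) * t ^ ((2-p)/2) = Ft ^ (-(1:ℝ)/2) * t := by
  rw [Real.mul_rpow hFt.le (Real.rpow_pos_of_pos ht _).le, ← Real.rpow_mul ht.le,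
    mul_assoc, ← Real.rpow_add ht, show (-p)*(-(1:ℝ)/2) + (2-p)/2 = 1 by ring, Real.rpow_one]

/-- `(m/2)·W(t)/t ≤ F(t)^{-1/2} ≤ (M/2)·W(t)/t` for all `t > 0`; since
`W'(t) = -F(t)^{-1/2}`, this says `(m/2)·W(t)/t ≤ -W'(t) ≤ (M/2)·W(t)/t`. -/
theorem W_derivative_comparison
    (m M : ℝ) (hm : 0 < m) (hmM : m ≤ M)
    (f : ℝ → ℝ) (hf0 : f 0 = 0) (hfnn : ∀ t, 0 ≤ f t) (hfpos : ∀ t > 0, 0 < f t)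
    (hfC1 : ContDiff ℝ 1 f) (hfmono : Monotone f)
    (hfscal : ∀ t > 0, (1 + m) * f t ≤ t * deriv f t ∧ t * deriv f t ≤ (1 + M) * f t)
    (hWfin : ∀ t > 0, IntegrableOn (fun s => (Fint f s) ^ (-(1:ℝ)/2)) (Set.Ioi t)) :
    ∀ t > 0, ((m / 2) * (Wfun f t / t) ≤ (Fint f t) ^ (-(1:ℝ)/2) ∧
      (Fint f t) ^ (-(1:ℝ)/2) ≤ (M / 2) * (Wfun f t / t)) ∧
    (HasDerivAt (Wfun f) (-((Fint f t) ^ (-(1:ℝ)/2))) t ∧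
      (m / 2) * (Wfun f t / t) ≤ -(deriv (Wfun f) t) ∧
      -(deriv (Wfun f) t) ≤ (M / 2) * (Wfun f t / t)) := by
  have hM : 0 < M := hm.trans_le hmM
  have hcont : Continuous f := hfC1.continuous
  set g : ℝ → ℝ := fun s => (Fint f s) ^ (-(1:ℝ)/2) with hg
  have hFpos : ∀ s > 0, 0 < Fint f s := fun s hs => Fint_pos hcont hfpos hs
  have h1 : ∀ s > 0, (2 + m) * Fint f s ≤ s * f s :=
    fun s hs => tf_lower hf0 hfC1 (fun u hu => (hfscal u hu).1) hs
  have h2 : ∀ s > 0, s * f s ≤ (2 + M) * Fint f s :=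
    fun s hs => tf_upper hf0 hfC1 (fun u hu => (hfscal u hu).2) hs
  have hmono := phi_mono hcont h1
  have hanti := phi_anti hcont h2
  intro t ht
  -- upper bound for W (m-side)
  have hle : ∀ s ∈ Set.Ioi t, g s ≤
      (Fint f t * t ^ (-(2+m))) ^ (-(1:ℝ)/2) * s ^ (-(2+m)/2) := by
    intro s hs
    have hst : t ≤ s := le_of_lt hs
    have hs0 : 0 < s := ht.trans hs
    exact pow_bound_of_le ht hs0 (hFpos t ht) (hFpos s hs0)
      (hmono ht hs0 hst)
  have hintm : IntegrableOn (fun s => (Fint f t * t ^ (-(2+m))) ^ (-(1:ℝ)/2) *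
      s ^ (-(2+m)/2)) (Set.Ioi t) :=
    (integrableOn_Ioi_rpow_of_lt (by linarith) ht).const_mul _
  have hWle : Wfun f t ≤ (Fint f t) ^ (-(1:ℝ)/2) * t * (2/m) := by
    have h3 : Wfun f t ≤ ∫ s in Set.Ioi t, (Fint f t * t ^ (-(2+m))) ^ (-(1:ℝ)/2) *
        s ^ (-(2+m)/2) :=
      setIntegral_mono_on (hWfin t ht) hintm measurableSet_Ioi hle
    rw [MeasureTheory.integral_const_mul, integral_Ioi_rpow_of_lt (by linarith) ht] at h3
    have e1 : -(2+m)/2 + 1 = (2-(2+m))/2 := by ring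
    rw [e1] at h3
    calc Wfun f t ≤ (Fint f t * t ^ (-(2+m))) ^ (-(1:ℝ)/2) *
          (-t ^ ((2-(2+m))/2) / ((2-(2+m))/2)) := h3
      _ = (Fint f t * t ^ (-(2+m))) ^ (-(1:ℝ)/2) * t ^ ((2-(2+m))/2) * (2/m) := by
          field_simp; ring_nf; rw [mul_comm m, mul_assoc, mul_inv_cancel₀ hm.ne', mul_one]
      _ = (Fint f t) ^ (-(1:ℝ)/2) * t * (2/m) := by rw [C_simp (hFpos t ht) ht]
  -- lower bound for W (M-side)
  have hge : ∀ s ∈ Set.Ioi t,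
      (Fint f t * t ^ (-(2+M))) ^ (-(1:ℝ)/2) * s ^ (-(2+M)/2) ≤ g s := by
    intro s hs
    have hst : t ≤ s := le_of_lt hs
    have hs0 : 0 < s := ht.trans hs
    exact pow_bound_of_ge ht hs0 (hFpos t ht) (hFpos s hs0)
      (hanti ht hs0 hst)
  have hintM : IntegrableOn (fun s => (Fint f t * t ^ (-(2+M))) ^ (-(1:ℝ)/2) *
      s ^ (-(2+M)/2)) (Set.Ioi t) :=
    (integrableOn_Ioi_rpow_of_lt (by linarith) ht).const_mul _
  have hWge : (Fint f t) ^ (-(1:ℝ)/2) * t * (2/M) ≤ Wfun f t := by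
    have h3 : (∫ s in Set.Ioi t, (Fint f t * t ^ (-(2+M))) ^ (-(1:ℝ)/2) *
        s ^ (-(2+M)/2)) ≤ Wfun f t :=
      setIntegral_mono_on hintM (hWfin t ht) measurableSet_Ioi hge
    rw [MeasureTheory.integral_const_mul, integral_Ioi_rpow_of_lt (by linarith) ht] at h3
    have e1 : -(2+M)/2 + 1 = (2-(2+M))/2 := by ring
    rw [e1] at h3
    calc (Fint f t) ^ (-(1:ℝ)/2) * t * (2/M)
        = (Fint f t * t ^ (-(2+M))) ^ (-(1:ℝ)/2) * t ^ ((2-(2+M))/2) * (2/M) := by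
          rw [C_simp (hFpos t ht) ht]
      _ = (Fint f t * t ^ (-(2+M))) ^ (-(1:ℝ)/2) *
          (-t ^ ((2-(2+M))/2) / ((2-(2+M))/2)) := by field_simp; ring_nf; rw [mul_comm M, mul_assoc, mul_inv_cancel₀ hM.ne', mul_one]
      _ ≤ Wfun f t := h3
  have hA : (m / 2) * (Wfun f t / t) ≤ (Fint f t) ^ (-(1:ℝ)/2) := by
    calc (m / 2) * (Wfun f t / t)
        ≤ (m / 2) * (((Fint f t) ^ (-(1:ℝ)/2) * t * (2/m)) / t) := by gcongr
      _ = (Fint f t) ^ (-(1:ℝ)/2) := by field_simp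
  have hB : (Fint f t) ^ (-(1:ℝ)/2) ≤ (M / 2) * (Wfun f t / t) := by
    calc (Fint f t) ^ (-(1:ℝ)/2)
        = (M / 2) * (((Fint f t) ^ (-(1:ℝ)/2) * t * (2/M)) / t) := by field_simp
      _ ≤ (M / 2) * (Wfun f t / t) := by gcongr
  -- derivative
  have hFc : Continuous (Fint f) :=
    (Differentiable.continuous (fun x => (Fint_hasDerivAt hcont x).differentiableAt : Differentiable ℝ (Fint f)))
  have hgconts : ∀ x > 0, ContinuousAt g x := by
    intro x hx
    have := (Real.continuousAt_rpow_const (Fint f x) (-(1:ℝ)/2) (Or.inl (hFpos x hx).ne'))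
    exact this.comp hFc.continuousAt
  have hgcont : ContinuousAt g t := hgconts t ht
  have hgmeas : StronglyMeasurableAtFilter g (𝓝 t) :=
    ⟨Set.Ioi 0, Ioi_mem_nhds ht, (ContinuousOn.aestronglyMeasurable
      (fun x hx => (hgconts x hx).continuousWithinAt) measurableSet_Ioi)⟩
  have hint : IntervalIntegrable g volume (t/2) t := by
    rw [intervalIntegrable_iff_integrableOn_Ioc_of_le (by linarith)]
    exact (hWfin (t/4) (by linarith)).mono_set (fun x hx => lt_trans (by linarith) hx.1)
  have hFTC : HasDerivAt (fun u => ∫ x in (t/2)..u, g x) (g t) t :=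
    intervalIntegral.integral_hasDerivAt_right hint
      hgmeas hgcont
  have hW_eq : Wfun f =ᶠ[𝓝 t] fun u => Wfun f (t/2) - ∫ x in (t/2)..u, g x := by
    filter_upwards [Ioi_mem_nhds (by linarith : t/2 < t)] with u hu
    have hu2 : t/2 < u := hu
    have hu0 : 0 < u := by linarith
    have hIoc : IntegrableOn g (Set.Ioc (t/2) u) :=
      (hWfin (t/4) (by linarith)).mono_set (fun x hx => lt_trans (by linarith) hx.1)
    have hIoi : IntegrableOn g (Set.Ioi u) := hWfin u hu0
    have hsplit : (∫ x in Set.Ioi (t/2), g x)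
        = (∫ x in Set.Ioc (t/2) u, g x) + ∫ x in Set.Ioi u, g x := by
      rw [← setIntegral_union (Set.Ioc_disjoint_Ioi le_rfl) measurableSet_Ioi hIoc hIoi,
        Set.Ioc_union_Ioi_eq_Ioi hu2.le]
    have : (∫ x in (t/2)..u, g x) = ∫ x in Set.Ioc (t/2) u, g x :=
      intervalIntegral.integral_of_le hu2.le
    rw [this]
    show (∫ x in Set.Ioi u, g x) = (∫ x in Set.Ioi (t/2), g x) - ∫ x in Set.Ioc (t/2) u, g x
    linarith [hsplit]
  have hWderiv : HasDerivAt (Wfun f) (-(g t)) t :=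
    ((hFTC.const_sub (Wfun f (t/2)))).congr_of_eventuallyEq hW_eq
  have hdval : deriv (Wfun f) t = -(g t) := hWderiv.deriv
  refine ⟨⟨hA, hB⟩, hWderiv, ?_, ?_⟩ <;> rw [hdval, neg_neg] <;> [exact hA; exact hB]
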